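/- A retract of a finitely presented group is finitely presented: if there are group homomorphisms i : H → G and r : G → H with r ∘ i = id_H and G is finitely presented, then H is finitely presented. -/

import Mathlib

universe u

/-- A group is finitely presented if it is the quotient of a finitely generated free group
by the normal closure of a finite set of relations. -/
def GroupFinitelyPresented (G : Type u) [Group G] : Prop :=
  ∃ (n : ℕ) (R : Set (FreeGroup (Fin n))) (f : FreeGroup (Fin n) →* G),
    R.Finite ∧ Function.Surjective f ∧ f.ker = Subgroup.normalClosure R

/-!
A retraction `r : G →* H` is surjective, so `H ≅ G ⧸ ker r`, and it suffices that `ker r` is the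
normal closure of a finite set. Take the elements `g⁻¹ * i (r g)` for `g` in a finite generating
set of `G`: modulo them the quotient map and its composite with `i ∘ r` agree on generators,
hence everywhere, so every `g ∈ ker r` becomes trivial.
-/

theorem groupFinitelyPresented_iff (G : Type u) [Group G] :
    GroupFinitelyPresented G ↔ Group.IsFinitelyPresented G := by
  rw [Group.isFinitelyPresented_iff]
  constructor
  · rintro ⟨n, R, f, hR, hf, hker⟩
    exact ⟨n, f, hf, R, hR, hker.symm⟩
  · rintro ⟨n, f, hf, R, hR, hker⟩
    exact ⟨n, R, f, hR, hf, hker.symm⟩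

namespace MonoidHom

variable {G H : Type*} [Group G] [Group H] {i : H →* G} {r : G →* H}

theorem ker_eq_normalClosure_of_leftInverse (hri : Function.LeftInverse r i) {S : Set G}
    (hS : Subgroup.closure S = ⊤) :
    r.ker = Subgroup.normalClosure ((fun g => g⁻¹ * i (r g)) '' S) := by
  set N := Subgroup.normalClosure ((fun g => g⁻¹ * i (r g)) '' S)
  apply le_antisymm
  · have hmk : QuotientGroup.mk' N = (QuotientGroup.mk' N).comp (i.comp r) :=
      eq_of_eqOn_dense hS fun g hg => by
        simpa [QuotientGroup.eq] using Subgroup.subset_normalClosure (Set.mem_image_of_mem _ hg)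
    intro g hg
    rw [← QuotientGroup.eq_one_iff, ← QuotientGroup.mk'_apply, hmk]
    simp [mem_ker.1 hg]
  · refine Subgroup.normalClosure_le_normal ?_
    rintro _ ⟨g, -, rfl⟩
    simp [hri (r g)]

theorem ker_isFinitelyNormallyGenerated_of_leftInverse [Group.FG G]
    (hri : Function.LeftInverse r i) : r.ker.IsFinitelyNormallyGenerated := by
  obtain ⟨S, hS, hSfin⟩ := Group.fg_iff.1 ‹Group.FG G›
  exact ⟨_, hSfin.image _, (ker_eq_normalClosure_of_leftInverse hri hS).symm⟩

end MonoidHom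

instance Group.IsFinitelyPresented.fg {G : Type*} [Group G] [hG : Group.IsFinitelyPresented G] :
    Group.FG G := by
  obtain ⟨n, φ, hφ, -⟩ := hG
  exact Group.fg_of_surjective hφ

theorem Group.IsFinitelyPresented.of_leftInverse {G H : Type*} [Group G] [Group H]
    [Group.IsFinitelyPresented G] {i : H →* G} {r : G →* H} (hri : Function.LeftInverse r i) :
    Group.IsFinitelyPresented H :=
  of_surjective r hri.surjective (MonoidHom.ker_isFinitelyNormallyGenerated_of_leftInverse hri)

/-- A retract of a finitely presented group is finitely presented: if
`i : H → G` and `r : G → H` are group homomorphisms with `r ∘ i = id_H` and `G` is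
finitely presented, then `H` is finitely presented. -/
theorem retract_of_finitelyPresented (G : Type u) (H : Type u) [Group G] [Group H]
    (i : H →* G) (r : G →* H) (hri : r.comp i = MonoidHom.id H)
    (hG : GroupFinitelyPresented G) :
    GroupFinitelyPresented H := by
  rw [groupFinitelyPresented_iff] at hG ⊢
  exact Group.IsFinitelyPresented.of_leftInverse (DFunLike.congr_fun hri)
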